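/- Let Z(t) be an n×m matrix of full rank satisfying Ż = AZ with A symmetric, and let X(t) = 2Z(ZᵀZ)⁻¹Zᵀ - I be the reflection with respect to the column space of Z. Then X(t) satisfies Ẋ = A - XAX. -/

import Mathlib

/-!
Write `X = 2P - 1` with `P = Z (ZᵀZ)⁻¹ Zᵀ`. The product and inverse rules, together with
`Ż = AZ` and `Żᵀ = ZᵀA`, give `Ṗ = AP + PA - 2PAP`; and `A - (2P - 1) A (2P - 1) = 2 (AP + PA - 2PAP)`
holds in any ring. Idempotence of `P` is not needed.
-/

open Matrix

attribute [local instance] Matrix.linftyOpNormedAddCommGroup Matrix.linftyOpNormedRing Matrix.linftyOpNormedSpace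
attribute [local instance] Matrix.linftyOpNormedAlgebra

section Calculus

variable {𝕜 : Type*} [NontriviallyNormedField 𝕜] {l m n : Type*} [Fintype l] [Fintype m]
  [Fintype n] {t : 𝕜}

theorem HasDerivAt.ringInverse {R : Type*} [NormedRing R] [NormedAlgebra 𝕜 R] [CompleteSpace R]
    {f : 𝕜 → R} {f' : R} (hf : HasDerivAt f f' t) (h : IsUnit (f t)) :
    HasDerivAt (fun s => Ring.inverse (f s))
      (-(Ring.inverse (f t) * f' * Ring.inverse (f t))) t := by
  obtain ⟨u, hu⟩ := h
  have := (hu ▸ hasFDerivAt_ringInverse (𝕜 := 𝕜) u).comp_hasDerivAt t hf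
  rw [← hu, Ring.inverse_unit]
  exact this

noncomputable def Matrix.mulCLM : Matrix l m 𝕜 →L[𝕜] Matrix m n 𝕜 →L[𝕜] Matrix l n 𝕜 :=
  (mulLinearMap 𝕜).mkContinuous₂ 1 fun A B => by simpa using linfty_opNorm_mul A B

theorem HasDerivAt.matrix_mul {f : 𝕜 → Matrix l m 𝕜} {g : 𝕜 → Matrix m n 𝕜}
    {f' : Matrix l m 𝕜} {g' : Matrix m n 𝕜} (hf : HasDerivAt f f' t) (hg : HasDerivAt g g' t) :
    HasDerivAt (fun s => f s * g s) (f' * g t + f t * g') t := by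
  rw [add_comm]
  exact Matrix.mulCLM.hasDerivAt_of_bilinear (fun _ => hf) (fun _ => hg)

theorem HasDerivAt.matrix_transpose [CompleteSpace 𝕜] {f : 𝕜 → Matrix m n 𝕜}
    {f' : Matrix m n 𝕜} (hf : HasDerivAt f f' t) :
    HasDerivAt (fun s => (f s)ᵀ) f'ᵀ t :=
  (transposeLinearEquiv m n 𝕜 𝕜).toContinuousLinearEquiv.hasFDerivAt.comp_hasDerivAt t hf

theorem HasDerivAt.matrix_inv [CompleteSpace 𝕜] [DecidableEq n] {f : 𝕜 → Matrix n n 𝕜}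
    {f' : Matrix n n 𝕜} (hf : HasDerivAt f f' t) (h : IsUnit (f t)) :
    HasDerivAt (fun s => (f s)⁻¹) (-((f t)⁻¹ * f' * (f t)⁻¹)) t := by
  -- the uniformity of the `L∞` operator norm is not syntactically the product uniformity
  have : @CompleteSpace (Matrix n n 𝕜) PseudoMetricSpace.toUniformSpace :=
    FiniteDimensional.complete 𝕜 _
  simp only [nonsing_inv_eq_ringInverse]
  exact hf.ringInverse h

end Calculus

theorem sub_reflection_conj {S R : Type*} [Semiring S] [Ring R] [Module S R] (A P : R) :
    A - ((2 : S) • P - 1) * A * ((2 : S) • P - 1)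
      = (2 : S) • (A * P + P * A - (2 : S) • (P * A * P)) := by
  simp only [two_smul]
  noncomm_ring

section Projection

variable {𝕜 : Type*} [NontriviallyNormedField 𝕜] [CompleteSpace 𝕜] {m n : Type*} [Fintype m]
  [Fintype n] [DecidableEq m]

noncomputable def colSpaceProj (Z : Matrix n m 𝕜) : Matrix n n 𝕜 := Z * (Zᵀ * Z)⁻¹ * Zᵀ

theorem hasDerivAt_colSpaceProj {A : Matrix n n 𝕜} (hA : Aᵀ = A) {Z : 𝕜 → Matrix n m 𝕜} {t : 𝕜}
    (hZ : HasDerivAt Z (A * Z t) t) (hrank : IsUnit ((Z t)ᵀ * Z t)) :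
    HasDerivAt (fun s => colSpaceProj (Z s))
      (A * colSpaceProj (Z t) + colSpaceProj (Z t) * A
        - (2 : 𝕜) • (colSpaceProj (Z t) * A * colSpaceProj (Z t))) t := by
  have hZT := hZ.matrix_transpose
  have hGram := hZT.matrix_mul hZ
  have hP := (hZ.matrix_mul (hGram.matrix_inv hrank)).matrix_mul hZT
  refine hP.congr_deriv ?_
  simp only [colSpaceProj, transpose_mul, hA, two_smul, Matrix.mul_add, Matrix.add_mul,
    Matrix.mul_neg, Matrix.neg_mul, Matrix.mul_assoc]
  abel

end Projection

/-- If `Z(t)` is an `n × m` matrix of full rank (`ZᵀZ` invertible) with `Ż = A Z`,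
`A` symmetric, then the reflection `X = 2 Z (ZᵀZ)⁻¹ Zᵀ - I` with respect to the column
space of `Z` satisfies `Ẋ = A - X A X`. -/
theorem reflection_flow (n m : ℕ)
    (A : Matrix (Fin n) (Fin n) ℝ) (hA : Aᵀ = A)
    (Z : ℝ → Matrix (Fin n) (Fin m) ℝ)
    (hZ : ∀ t, HasDerivAt Z (A * Z t) t)
    (hrank : ∀ t, IsUnit ((Z t)ᵀ * Z t)) :
    ∀ t, HasDerivAt
      (fun s => (2 : ℝ) • (Z s * ((Z s)ᵀ * Z s)⁻¹ * (Z s)ᵀ) - 1)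
      (A - ((2 : ℝ) • (Z t * ((Z t)ᵀ * Z t)⁻¹ * (Z t)ᵀ) - 1) * A *
           ((2 : ℝ) • (Z t * ((Z t)ᵀ * Z t)⁻¹ * (Z t)ᵀ) - 1)) t := by
  intro t
  rw [sub_reflection_conj]
  exact ((hasDerivAt_colSpaceProj hA (hZ t) (hrank t)).const_smul (2 : ℝ)).sub_const 1
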